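/- (Asymptotic estimate via Taylor/FTC expansion) Let σ be a sigmoidal function whose density φ_σ(x) = (σ(x+1)-σ(x-1))/2 has compact support in [-Υ, Υ], Υ > 0, and satisfies the standing assumptions. Let f ∈ AC([a,b]) with derivative f′, extended periodically. Then for every x ∈ [a,b] and n ∈ ℕ (with ⌈na⌉ ≤ ⌊nb⌋-1), |K_n f(x) - f(x)| ≤ ∫_{|z| ≤ (1+Υ)/n} |f′(z+x)| dz. -/

import Mathlib

open Filter MeasureTheory

/-- The density function generated by a sigmoidal function. -/
noncomputable def phiSigma (σ : ℝ → ℝ) (x : ℝ) : ℝ := (σ (x + 1) - σ (x - 1)) / 2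

/-- The Kantorovich neural network operator `K_n f`. -/
noncomputable def Kop (σ : ℝ → ℝ) (a b : ℝ) (n : ℕ) (f : ℝ → ℝ) (x : ℝ) : ℝ :=
  (∑ k ∈ Finset.Icc ⌈(n : ℝ) * a⌉ (⌊(n : ℝ) * b⌋ - 1),
      ((n : ℝ) * ∫ u in ((k : ℝ) / n)..(((k : ℝ) + 1) / n), f u) *
        phiSigma σ ((n : ℝ) * x - (k : ℝ))) /
  (∑ k ∈ Finset.Icc ⌈(n : ℝ) * a⌉ (⌊(n : ℝ) * b⌋ - 1),
      phiSigma σ ((n : ℝ) * x - (k : ℝ)))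

/-! `K_n f(x) - f(x)` is a convex combination of the differences `n ∫_{k/n}^{(k+1)/n} f - f(x)`
over the cells with `φ_σ(nx - k) ≠ 0`. On such a cell `|nx - k| ≤ Υ`, so every point `u` of it
satisfies `|u - x| ≤ (1 + Υ)/n`, and `|f u - f x| = |∫_x^u f'|` is at most the integral of `|f'|`
over that window. The denominator is positive because some admissible `k` has `nx - k ∈ (-1, 2)`,
where concavity of `σ` on `[0, ∞)` together with `σ 1 < 1 = lim σ` makes `φ_σ` positive. -/

theorem ConcaveOn.lt_of_lt_tendsto_atTop {g : ℝ → ℝ} {c L s t : ℝ}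
    (hg : ConcaveOn ℝ (Set.Ici c) g) (hlim : Tendsto g atTop (nhds L))
    (hs : c ≤ s) (hst : s < t) (hgs : g s < L) : g s < g t := by
  by_contra! hts
  have hflat : ∀ u, t ≤ u → g u ≤ g t := fun u hu =>
    hg.right_le_of_le_left'' hs (show c ≤ u by linarith) hst hu hts
  have : L ≤ g t := le_of_tendsto hlim (eventually_atTop.2 ⟨t, hflat⟩)
  linarith

section Sigmoidal

variable {σ : ℝ → ℝ}

theorem Monotone.phiSigma_nonneg (hmono : Monotone σ) (t : ℝ) : 0 ≤ phiSigma σ t := by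
  have := hmono (show t - 1 ≤ t + 1 by linarith)
  unfold phiSigma
  linarith

theorem phiSigma_pos (hmono : Monotone σ) (h1 : Tendsto σ atTop (nhds 1))
    (hconc : ConcaveOn ℝ (Set.Ici 0) σ) (hσ1 : σ 1 < 1) {t : ℝ} (ht : -1 < t) (ht' : t ≤ 2) :
    0 < phiSigma σ t := by
  have hlow : σ (t - 1) ≤ σ (max (t - 1) 0) := hmono (le_max_left _ _)
  have hσs : σ (max (t - 1) 0) < 1 :=
    (hmono (max_le (by linarith) zero_le_one)).trans_lt hσ1
  have hup : σ (max (t - 1) 0) < σ (t + 1) :=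
    hconc.lt_of_lt_tendsto_atTop h1 (le_max_right _ _) (max_lt (by linarith) (by linarith)) hσs
  unfold phiSigma
  linarith

theorem exists_mem_Icc_ceil_floor_sub_mem_Ioo {A B y : ℝ} (hA : A ≤ y) (hB : y ≤ B)
    (h : ⌈A⌉ ≤ ⌊B⌋ - 1) :
    ∃ k ∈ Finset.Icc ⌈A⌉ (⌊B⌋ - 1), -1 < y - k ∧ y - k < 2 := by
  refine ⟨min ⌈y⌉ (⌊B⌋ - 1), Finset.mem_Icc.2 ⟨le_min (Int.ceil_le_ceil hA) h, min_le_right _ _⟩,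
    ?_, ?_⟩
  · have hmin : ((min ⌈y⌉ (⌊B⌋ - 1) : ℤ) : ℝ) ≤ ⌈y⌉ := by exact_mod_cast min_le_left _ _
    linarith [Int.ceil_lt_add_one y]
  · rcases min_cases ⌈y⌉ (⌊B⌋ - 1) with ⟨he, -⟩ | ⟨he, -⟩ <;> rw [he]
    · linarith [Int.le_ceil y]
    · push_cast
      linarith [Int.lt_floor_add_one B]

theorem sum_phiSigma_pos (hmono : Monotone σ) (h1 : Tendsto σ atTop (nhds 1))
    (hconc : ConcaveOn ℝ (Set.Ici 0) σ) (hσ1 : σ 1 < 1) {n a b x : ℝ} (hn : 0 ≤ n)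
    (hx : x ∈ Set.Icc a b) (h : ⌈n * a⌉ ≤ ⌊n * b⌋ - 1) :
    0 < ∑ k ∈ Finset.Icc ⌈n * a⌉ (⌊n * b⌋ - 1), phiSigma σ (n * x - k) := by
  obtain ⟨k, hk, hlo, hhi⟩ := exists_mem_Icc_ceil_floor_sub_mem_Ioo
    (mul_le_mul_of_nonneg_left hx.1 hn) (mul_le_mul_of_nonneg_left hx.2 hn) h
  exact (phiSigma_pos hmono h1 hconc hσ1 hlo hhi.le).trans_le
    (Finset.single_le_sum (f := fun j : ℤ => phiSigma σ (n * x - j))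
      (fun j _ => hmono.phiSigma_nonneg _) hk)

end Sigmoidal

theorem abs_sum_mul_div_sum_sub_le {ι : Type*} {s : Finset ι} {c w : ι → ℝ} {y M : ℝ}
    (hw : ∀ i ∈ s, 0 ≤ w i) (hpos : 0 < ∑ i ∈ s, w i)
    (hc : ∀ i ∈ s, w i ≠ 0 → |c i - y| ≤ M) :
    |(∑ i ∈ s, c i * w i) / ∑ i ∈ s, w i - y| ≤ M := by
  have hterm : ∀ i ∈ s, |(c i - y) * w i| ≤ M * w i := fun i hi => by
    rw [abs_mul, abs_of_nonneg (hw i hi)]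
    rcases eq_or_ne (w i) 0 with h | h
    · simp [h]
    · exact mul_le_mul_of_nonneg_right (hc i hi h) (hw i hi)
  rw [div_sub' hpos.ne', abs_div, abs_of_pos hpos, div_le_iff₀ hpos, Finset.sum_mul,
    ← Finset.sum_sub_distrib]
  calc |∑ i ∈ s, (c i * w i - w i * y)| = |∑ i ∈ s, (c i - y) * w i| := by
        simp only [sub_mul, mul_comm (w _) y]
    _ ≤ ∑ i ∈ s, |(c i - y) * w i| := Finset.abs_sum_le_sum_abs _ _
    _ ≤ ∑ i ∈ s, M * w i := Finset.sum_le_sum hterm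
    _ = M * ∑ i ∈ s, w i := (Finset.mul_sum _ _ _).symm

theorem abs_mul_integral_sub_le {f : ℝ → ℝ} {n c y M : ℝ} (hn : 0 < n)
    (hf : IntervalIntegrable f volume (c / n) ((c + 1) / n))
    (h : ∀ u ∈ Set.Ioc (c / n) ((c + 1) / n), |f u - y| ≤ M) :
    |n * (∫ u in (c / n)..((c + 1) / n), f u) - y| ≤ M := by
  have hlen : (c + 1) / n - c / n = n⁻¹ := by field_simp; ring
  have hcell : c / n ≤ (c + 1) / n := by linarith [inv_pos.2 hn]
  have hshift : n * (∫ u in (c / n)..((c + 1) / n), f u) - y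
      = n * ∫ u in (c / n)..((c + 1) / n), (f u - y) := by
    rw [intervalIntegral.integral_sub hf intervalIntegrable_const, intervalIntegral.integral_const,
      smul_eq_mul, hlen]
    field_simp
  have hbound := intervalIntegral.norm_integral_le_of_norm_le_const (C := M)
    (f := fun u => f u - y) (a := c / n) (b := (c + 1) / n)
    fun u hu => by rw [Set.uIoc_of_le hcell] at hu; exact h u hu
  rw [Real.norm_eq_abs, hlen, abs_of_pos (inv_pos.2 hn)] at hbound
  rw [hshift, abs_mul, abs_of_pos hn]
  calc n * |∫ u in (c / n)..((c + 1) / n), (f u - y)| ≤ n * (M * n⁻¹) := by gcongr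
    _ = M := by field_simp

theorem abs_sub_le_of_mem_Ioc_div {n c x u Υ : ℝ} (hn : 0 < n) (hc : |n * x - c| ≤ Υ)
    (hu : u ∈ Set.Ioc (c / n) ((c + 1) / n)) : |u - x| ≤ (1 + Υ) / n := by
  have hlo : c < u * n := (div_lt_iff₀ hn).1 hu.1
  have hhi : u * n ≤ c + 1 := (le_div_iff₀ hn).1 hu.2
  rw [le_div_iff₀ hn, ← abs_of_pos hn, ← abs_mul, abs_le]
  rw [abs_le] at hc
  constructor <;> nlinarith

section FTC

variable {f f' : ℝ → ℝ}

theorem continuous_of_sub_eq_integral (hf' : LocallyIntegrable f')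
    (hFTC : ∀ u v : ℝ, f v - f u = ∫ t in u..v, f' t) : Continuous f := by
  have hf : f = fun v => f 0 + ∫ t in (0 : ℝ)..v, f' t := funext fun v => by
    linarith [hFTC 0 v]
  rw [hf]
  exact continuous_const.add (intervalIntegral.continuous_primitive
    (fun u v => (hf'.integrableOn_isCompact isCompact_uIcc).intervalIntegrable) 0)

theorem abs_sub_le_integral_abs_comp_add (hf' : LocallyIntegrable f')
    (hFTC : ∀ u v : ℝ, f v - f u = ∫ t in u..v, f' t) {x u δ : ℝ} (hu : |u - x| ≤ δ) :
    |f u - f x| ≤ ∫ z in (-δ)..δ, |f' (z + x)| := by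
  rw [abs_le] at hu
  have hwindow : ∫ z in (-δ)..δ, |f' (z + x)| = ∫ t in Set.Ioc (x - δ) (x + δ), |f' t| := by
    rw [intervalIntegral.integral_comp_add_right (fun t => |f' t|) x,
      intervalIntegral.integral_of_le (by linarith), neg_add_eq_sub, add_comm δ]
  rw [hFTC x u, hwindow]
  refine (intervalIntegral.norm_integral_le_integral_norm_uIoc (f := f') (μ := volume)).trans ?_
  refine setIntegral_mono_set ?_ (Eventually.of_forall fun t => norm_nonneg _) ?_
  · exact ((hf'.integrableOn_isCompact isCompact_Icc).mono_set Set.Ioc_subset_Icc_self).norm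
  · rw [Set.uIoc]
    exact LE.le.eventuallyLE <| Set.Ioc_subset_Ioc (le_min (by linarith) (by linarith))
      (max_le (by linarith) (by linarith))

end FTC

theorem stmt_18_general (σ : ℝ → ℝ) (hmono : Monotone σ)
    (h1 : Tendsto σ atTop (nhds 1))
    (hconc : ConcaveOn ℝ (Set.Ici 0) σ)
    (hσ1 : σ 1 < 1)
    (Υ : ℝ)
    (hsupp : ∀ x : ℝ, Υ < |x| → phiSigma σ x = 0)
    (a b : ℝ)
    (f f' : ℝ → ℝ)
    (hf'loc : LocallyIntegrable f')
    (hFTC : ∀ u v : ℝ, f v - f u = ∫ t in u..v, f' t)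
    (n : ℕ) (hn1 : 1 ≤ n)
    (hn : ⌈(n : ℝ) * a⌉ ≤ ⌊(n : ℝ) * b⌋ - 1)
    (x : ℝ) (hx : x ∈ Set.Icc a b) :
    |Kop σ a b n f x - f x| ≤
      ∫ z in (-(1 + Υ) / n)..((1 + Υ) / n), |f' (z + x)| := by
  have hn0 : (0 : ℝ) < n := by exact_mod_cast hn1
  have hfc : Continuous f := continuous_of_sub_eq_integral hf'loc hFTC
  refine abs_sum_mul_div_sum_sub_le (fun k _ => hmono.phiSigma_nonneg _)
    (sum_phiSigma_pos hmono h1 hconc hσ1 hn0.le hx hn) fun k _ hk => ?_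
  have hkΥ : |(n : ℝ) * x - k| ≤ Υ := not_lt.1 (mt (hsupp _) hk)
  refine abs_mul_integral_sub_le hn0 (hfc.intervalIntegrable _ _) fun u hu => ?_
  rw [neg_div]
  exact abs_sub_le_integral_abs_comp_add hf'loc hFTC (abs_sub_le_of_mem_Ioc_div hn0 hkΥ hu)

/-- if `φ_σ` is supported in `[-Υ, Υ]` and `f` is absolutely continuous
(with derivative `f'`, extended periodically), then
`|K_n f(x) - f(x)| ≤ ∫_{|z| ≤ (1+Υ)/n} |f'(z + x)| dz`. -/
theorem stmt_18 (σ : ℝ → ℝ) (hmeas : Measurable σ) (hmono : Monotone σ)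
    (h0 : Tendsto σ atBot (nhds 0)) (h1 : Tendsto σ atTop (nhds 1))
    (hodd : ∀ x : ℝ, σ (-x) - 1 / 2 = -(σ x - 1 / 2))
    (hC2 : ContDiff ℝ 2 σ) (hconc : ConcaveOn ℝ (Set.Ici 0) σ)
    (hσ1 : σ 1 < 1)
    (Υ : ℝ) (hΥ : 0 < Υ)
    (hsupp : ∀ x : ℝ, Υ < |x| → phiSigma σ x = 0)
    (a b : ℝ) (hab : a < b)
    (f f' : ℝ → ℝ) (hper : Function.Periodic f (b - a))
    (hf'loc : LocallyIntegrable f')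
    (hFTC : ∀ u v : ℝ, f v - f u = ∫ t in u..v, f' t)
    (n : ℕ) (hn1 : 1 ≤ n)
    (hn : ⌈(n : ℝ) * a⌉ ≤ ⌊(n : ℝ) * b⌋ - 1)
    (x : ℝ) (hx : x ∈ Set.Icc a b) :
    |Kop σ a b n f x - f x| ≤
      ∫ z in (-(1 + Υ) / n)..((1 + Υ) / n), |f' (z + x)| :=
  stmt_18_general σ hmono h1 hconc hσ1 Υ hsupp a b f f' hf'loc hFTC n hn1 hn x hx
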